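/- arXiv:1304.6481 — 2 statements merged into one kernel-verified Lean document; each statement's English description precedes it below -/
import Mathlib

section
/- Let T be an element with faces, q ∈ [P_{k-1}(T)]^d, and v = {v_0, v_b} a weak function with v_0 a polynomial of degree k. If the discrete weak gradient of v vanishes (∇_{w,k-1,T} v = 0) and Q_b v_0 = v_b on ∂T, then ∇v_0 = 0 on T, i.e., v_0 is constant on T. -/
open MeasureTheory
open scoped RealInnerProductSpace

abbrev Euc (d : ℕ) := EuclideanSpace ℝ (Fin d)

def PolyScal (d r : ℕ) : Set (Euc d → ℝ) :=
  {f | ∃ p : MvPolynomial (Fin d) ℝ, p.totalDegree ≤ r ∧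
    ∀ x, f x = MvPolynomial.eval (fun i => x i) p}

def PolyVec (d r : ℕ) : Set (Euc d → Euc d) :=
  {q | ∀ i, (fun x => q x i) ∈ PolyScal d r}

/-! Test the weak gradient against `q = ∇v₀`, which is admissible because the partial
derivatives of a polynomial of degree `k` have degree at most `k - 1`. Since `v_b = Q_b v₀` on
`∂T` and `v₀ - Q_b v₀` is orthogonal to `q·n`, the boundary term drops out, leaving
`∫_T |∇v₀|² = 0`. As `∇v₀` is continuous and `T` is open, `∇v₀` vanishes on `T`. -/

namespace MvPolynomial

theorem totalDegree_pderiv_le {R σ : Type*} [CommSemiring R] (p : MvPolynomial σ R) (i : σ) :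
    (pderiv i p).totalDegree ≤ p.totalDegree - 1 := by
  conv_lhs => rw [← p.sum_homogeneousComponent, map_sum]
  refine (totalDegree_finsetSum _ _).trans (Finset.sup_le fun n hn => ?_)
  have hdeg := ((homogeneousComponent_isHomogeneous n p).pderiv (i := i)).totalDegree_le
  have hn := Finset.mem_range.1 hn
  omega

variable {ι 𝕜 : Type*} [Fintype ι] [NontriviallyNormedField 𝕜]

open ContinuousLinearMap in
theorem hasFDerivAt_eval (p : MvPolynomial ι 𝕜) (x : ι → 𝕜) :
    HasFDerivAt (fun y : ι → 𝕜 => eval y p)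
      (∑ i, eval x (pderiv i p) • proj (R := 𝕜) (φ := fun _ : ι => 𝕜) i) x := by
  classical
  induction p using MvPolynomial.induction_on with
  | C a =>
    simp only [eval_C]
    exact (hasFDerivAt_const a x).congr_fderiv (by ext; simp)
  | add p q hp hq =>
    simp only [map_add]
    exact (hp.fun_add hq).congr_fderiv (by ext; simp [add_mul, Finset.sum_add_distrib])
  | mul_X p i hp =>
    simp only [map_mul, eval_X]
    refine (hp.fun_mul (hasFDerivAt_apply i x)).congr_fderiv ?_
    ext v
    simp [Derivation.leibniz, pderiv_X, Pi.single_apply, add_mul, Finset.sum_add_distrib,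
      Finset.mul_sum, apply_ite, mul_assoc]

end MvPolynomial

open MvPolynomial InnerProductSpace
open scoped Gradient

theorem fderiv_eval_ofLp_single {ι 𝕜 : Type*} [Fintype ι] [DecidableEq ι] [RCLike 𝕜]
    (p : MvPolynomial ι 𝕜) (x : EuclideanSpace 𝕜 ι) (i : ι) :
    fderiv 𝕜 (fun y : EuclideanSpace 𝕜 ι => eval y.ofLp p) x (EuclideanSpace.single i 1) =
      eval x.ofLp (pderiv i p) := by
  have h : HasFDerivAt (fun y : EuclideanSpace 𝕜 ι => eval y.ofLp p) _ x :=
    (hasFDerivAt_eval p x.ofLp).comp x (PiLp.hasFDerivAt_ofLp 2 x)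
  rw [h.fderiv]
  simp

theorem PolyScal.continuous {d r : ℕ} {f : Euc d → ℝ} (hf : f ∈ PolyScal d r) :
    Continuous f := by
  obtain ⟨p, -, hp⟩ := hf
  rw [funext hp]
  exact (continuous_eval p).comp (PiLp.continuous_ofLp 2 _)

theorem PolyVec.continuous {d r : ℕ} {q : Euc d → Euc d} (hq : q ∈ PolyVec d r) :
    Continuous q :=
  (PiLp.continuous_toLp 2 _).comp (continuous_pi fun i => PolyScal.continuous (hq i))

theorem PolyScal.gradient_mem_polyVec {d k : ℕ} {f : Euc d → ℝ} (hf : f ∈ PolyScal d k) :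
    ∇ f ∈ PolyVec d (k - 1) := by
  obtain ⟨p, hpk, hp⟩ := hf
  obtain rfl : f = fun y => eval y.ofLp p := funext hp
  intro i
  refine ⟨pderiv i p, (totalDegree_pderiv_le p i).trans (Nat.sub_le_sub_right hpk 1),
    fun x => ?_⟩
  rw [← fderiv_eval_ofLp_single, ← inner_gradient_left, EuclideanSpace.inner_single_right]
  simp

theorem eqOn_zero_of_setIntegral_eq_zero {X : Type*} [TopologicalSpace X] [MeasurableSpace X]
    {μ : Measure X} [μ.IsOpenPosMeasure] {f : X → ℝ} {U : Set X} (hU : IsOpen U)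
    (hf : ContinuousOn f U) (hf0 : 0 ≤ f) (hfi : IntegrableOn f U μ)
    (h : ∫ x in U, f x ∂μ = 0) : Set.EqOn f 0 U :=
  Measure.eqOn_open_of_ae_eq ((setIntegral_eq_zero_iff_of_nonneg_ae (.of_forall hf0) hfi).1 h)
    hU hf continuousOn_const

theorem weak_gradient_zero_implies_gradient_zero_general
    {d k : ℕ}
    (T : Set (Euc d)) (hTopen : IsOpen T)
    (hTbdd : Bornology.IsBounded T)
    (σ : Measure (Euc d)) (n : Euc d → Euc d)
    (v0 : Euc d → ℝ) (hv0 : v0 ∈ PolyScal d k)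
    (vb Qbv0 : Euc d → ℝ)
    -- Q_b is the L² projection onto P_{k-1} on each face; q·n is such a polynomial:
    (hQborth : ∀ q ∈ PolyVec d (k-1),
      ∫ x in frontier T, (v0 x - Qbv0 x) * ⟪q x, n x⟫ ∂σ = 0)
    -- hypothesis: Q_b v₀ = v_b on ∂T
    (hQbeq : ∀ x ∈ frontier T, Qbv0 x = vb x)
    -- hypothesis: the discrete weak gradient of v vanishes
    (hwg0 : ∀ q ∈ PolyVec d (k-1),
      (∫ x in T, fderiv ℝ v0 x (q x)) +
        (∫ x in frontier T, (vb x - v0 x) * ⟪q x, n x⟫ ∂σ) = 0) :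
    ∀ x ∈ T, fderiv ℝ v0 x = 0 := by
  have hgrad : ∇ v0 ∈ PolyVec d (k - 1) := PolyScal.gradient_mem_polyVec hv0
  have hbdry : ∫ x in frontier T, (vb x - v0 x) * ⟪∇ v0 x, n x⟫ ∂σ = 0 := by
    rw [← neg_eq_zero, ← integral_neg, ← hQborth _ hgrad]
    refine setIntegral_congr_fun isClosed_frontier.measurableSet fun x hx => ?_
    simp only [← hQbeq x hx]
    ring
  have hnorm : ∫ x in T, ‖∇ v0 x‖ ^ 2 = 0 := by
    simpa only [← inner_gradient_left, real_inner_self_eq_norm_sq, hbdry, add_zero]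
      using hwg0 _ hgrad
  have hcont : Continuous fun x => ‖∇ v0 x‖ ^ 2 := (PolyVec.continuous hgrad).norm.pow 2
  have hzero := eqOn_zero_of_setIntegral_eq_zero hTopen hcont.continuousOn
    (fun x => by positivity)
    ((hcont.continuousOn.integrableOn_compact hTbdd.isCompact_closure).mono_set subset_closure)
    hnorm
  intro x hx
  have hx0 : ∇ v0 x = 0 := by simpa using hzero hx
  rw [← toDual_gradient, hx0, map_zero]

/-- if the discrete weak gradient of `v = {v₀, v_b}` vanishes
(`∇_{w,k-1,T} v = 0`, expressed through the identity
`(∇_{w,k-1,T}v, q)_T = (∇v₀,q)_T + ⟨v_b - v₀, q·n⟩_{∂T}`), and `Q_b v₀ = v_b` on `∂T`,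
then `∇v₀ = 0` on `T`, i.e. the degree-`k` polynomial `v₀` is constant on `T`. -/
theorem weak_gradient_zero_implies_gradient_zero
    {d k : ℕ} (hk : 1 ≤ k)
    (T : Set (Euc d)) (hTopen : IsOpen T) (hTne : T.Nonempty)
    (hTbdd : Bornology.IsBounded T)
    (σ : Measure (Euc d)) (n : Euc d → Euc d)
    (v0 : Euc d → ℝ) (hv0 : v0 ∈ PolyScal d k)
    (vb Qbv0 : Euc d → ℝ)
    -- Q_b is the L² projection onto P_{k-1} on each face; q·n is such a polynomial:
    (hQborth : ∀ q ∈ PolyVec d (k-1),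
      ∫ x in frontier T, (v0 x - Qbv0 x) * ⟪q x, n x⟫ ∂σ = 0)
    -- hypothesis: Q_b v₀ = v_b on ∂T
    (hQbeq : ∀ x ∈ frontier T, Qbv0 x = vb x)
    -- hypothesis: the discrete weak gradient of v vanishes
    (hwg0 : ∀ q ∈ PolyVec d (k-1),
      (∫ x in T, fderiv ℝ v0 x (q x)) +
        (∫ x in frontier T, (vb x - v0 x) * ⟪q x, n x⟫ ∂σ) = 0) :
    ∀ x ∈ T, fderiv ℝ v0 x = 0 :=
  weak_gradient_zero_implies_gradient_zero_general T hTopen hTbdd σ n v0 hv0 vb Qbv0 hQborth hQbeq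
    hwg0
end

section
/- For the WG solution u_h with numerical flux q_h := −Q_h(a∇_w u_h) + ρ h_T^{-1}(Q_b u_0 − u_b) n on each element T, the local mass balance holds: ∫_{∂T} q_h·n ds = ∫_T f dT for each element T of the partition. -/
open MeasureTheory
open scoped RealInnerProductSpace

noncomputable def divg {d : ℕ} (f : Euc d → Euc d) (x : Euc d) : ℝ :=
  ∑ i, fderiv ℝ f x (EuclideanSpace.single i 1) i

/-- local mass conservation of the WG method. With the numerical flux
`q_h = −𝒬_h(a∇_w u_h) + ρ h_T⁻¹ (Q_b u₀ − u_b) n` on the element `T`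
(here `Fq = 𝒬_h(a∇_w u_h)`, `Gu = ∇_w u_h`), one has `∫_{∂T} q_h·n = ∫_T f`.
The hypotheses encode: the scheme tested with `v = {χ_T, 0}` (whose weak gradient `Gv`
satisfies `(Gv, q)_T = −∫_T ∇·q`), the orthogonality defining `𝒬_h`, and the divergence
theorem for the polynomial field `Fq`. -/
theorem wg_local_mass_conservation
    {d k : ℕ} (hk : 1 ≤ k)
    (T : Set (Euc d)) (hTbdd : Bornology.IsBounded T)
    (σ : Measure (Euc d)) (n : Euc d → Euc d)
    (hunit : ∀ x, ⟪n x, n x⟫ = (1:ℝ))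
    (amat : Euc d →L[ℝ] Euc d)
    (f Qbu0 ub : Euc d → ℝ) (Gu : Euc d → Euc d) (ρ hT : ℝ)
    -- Fq = 𝒬_h(a ∇_w u_h)
    (Fq : Euc d → Euc d) (hFqmem : Fq ∈ PolyVec d (k-1))
    (horth : ∀ q ∈ PolyVec d (k-1), ∫ x in T, ⟪amat (Gu x) - Fq x, q x⟫ = 0)
    -- Gv = ∇_w v for the test function v = {1 on T, 0 on ∂T}
    (Gv : Euc d → Euc d) (hGvmem : Gv ∈ PolyVec d (k-1))
    (hGvdef : ∀ q ∈ PolyVec d (k-1),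
      ∫ x in T, ⟪Gv x, q x⟫ = -(∫ x in T, divg q x))
    -- divergence theorem for the polynomial field Fq
    (hdivthm : ∫ x in T, divg Fq x = ∫ x in frontier T, ⟪Fq x, n x⟫ ∂σ)
    -- integrability of the integrands that get split
    (hi1 : Integrable (fun x => ⟪amat (Gu x), Gv x⟫) (volume.restrict T))
    (hi2 : Integrable (fun x => ⟪Fq x, Gv x⟫) (volume.restrict T))
    (hb1 : Integrable (fun x => ⟪Fq x, n x⟫) (σ.restrict (frontier T)))
    (hb2 : Integrable (fun x => Qbu0 x - ub x) (σ.restrict (frontier T)))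
    -- the WG scheme tested with v = {χ_T, 0}
    (hscheme : (∫ x in T, ⟪amat (Gu x), Gv x⟫) +
        ρ * hT⁻¹ * (∫ x in frontier T, (Qbu0 x - ub x) ∂σ) = ∫ x in T, f x) :
    (∫ x in frontier T,
        ⟪-Fq x + (ρ * hT⁻¹ * (Qbu0 x - ub x)) • n x, n x⟫ ∂σ) = ∫ x in T, f x := by
  have h1 : ∫ x in T, ⟪amat (Gu x), Gv x⟫ = ∫ x in T, ⟪Fq x, Gv x⟫ := by
    have := horth Gv hGvmem
    have hsplit : ∫ x in T, ⟪amat (Gu x) - Fq x, Gv x⟫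
        = (∫ x in T, ⟪amat (Gu x), Gv x⟫) - ∫ x in T, ⟪Fq x, Gv x⟫ := by
      rw [← integral_sub hi1 hi2]
      congr 1; funext x; rw [inner_sub_left]
    rw [hsplit] at this; linarith
  have h2 : ∫ x in T, ⟪Fq x, Gv x⟫ = -(∫ x in frontier T, ⟪Fq x, n x⟫ ∂σ) := by
    have := hGvdef Fq hFqmem
    rw [← hdivthm, ← this]
    congr 1; funext x; rw [real_inner_comm]
  have hsplit2 : (∫ x in frontier T,
      ⟪-Fq x + (ρ * hT⁻¹ * (Qbu0 x - ub x)) • n x, n x⟫ ∂σ)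
      = (∫ x in frontier T, -⟪Fq x, n x⟫ + ρ * hT⁻¹ * (Qbu0 x - ub x) ∂σ) := by
    congr 1; funext x
    rw [inner_add_left, inner_neg_left, real_inner_smul_left, hunit, mul_one]
  have hadd : ∫ x in frontier T, (-⟪Fq x, n x⟫ + ρ * hT⁻¹ * (Qbu0 x - ub x)) ∂σ
      = -(∫ x in frontier T, ⟪Fq x, n x⟫ ∂σ)
        + ρ * hT⁻¹ * (∫ x in frontier T, (Qbu0 x - ub x) ∂σ) := by
    have hadd0 := integral_add (μ := σ.restrict (frontier T)) hb1.neg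
      (hb2.const_mul (ρ * hT⁻¹))
    simp only [Pi.neg_apply] at hadd0
    rw [integral_neg, integral_const_mul] at hadd0
    exact hadd0
  rw [hsplit2, hadd]
  have := hscheme
  rw [h1, h2] at this
  linarith
end
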